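/- arXiv:1609.03682 — 4 statements merged into one kernel-verified Lean document; each statement's English description precedes it below -/
import Mathlib

section
/- Let k ≥ 1 be an integer and let z ∈ ℂ satisfy Re(z) ≥ 0 and z ≠ 0. Then |R_{k+1}(z)| ≤ (√π · Γ(k+1/2)/Γ(k)) · |T_k(z)|. -/
open MeasureTheory Real

open Nat Set

lemma bernoulli_poly_bound {k : ℕ} (hk : k ≠ 0) {x : ℝ} (hx : x ∈ Set.Icc (0:ℝ) 1) :
    |(Polynomial.map (algebraMap ℚ ℝ) (Polynomial.bernoulli (2 * k))).eval x| ≤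
      |((bernoulli (2 * k) : ℚ) : ℝ)| := by
  set P : Polynomial ℝ := Polynomial.map (algebraMap ℚ ℝ) (Polynomial.bernoulli (2 * k)) with hP
  set A : ℝ := (-1 : ℝ) ^ (k + 1) * (2 * π) ^ (2 * k) / 2 / (2 * k)! with hA
  have hAne : A ≠ 0 := by
    apply div_ne_zero (div_ne_zero (mul_ne_zero (pow_ne_zero _ (by norm_num)) (by positivity)) two_ne_zero)
    positivity
  have h0 : HasSum (fun n : ℕ => 1 / (n : ℝ) ^ (2 * k)) (A * P.eval 0) := by
    have h := hasSum_one_div_nat_pow_mul_cos hk (x := 0) (Set.left_mem_Icc.mpr zero_le_one)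
    simp only [mul_zero, Real.cos_zero, mul_one] at h
    exact h
  have hxs : HasSum (fun n : ℕ => 1 / (n : ℝ) ^ (2 * k) * Real.cos (2 * π * n * x))
      (A * P.eval x) := hasSum_one_div_nat_pow_mul_cos hk hx
  have hsum : Summable (fun n : ℕ => 1 / (n : ℝ) ^ (2 * k)) := h0.summable
  have hterm : ∀ n : ℕ, |1 / (n : ℝ) ^ (2 * k) * Real.cos (2 * π * n * x)| ≤ 1 / (n : ℝ) ^ (2 * k) := by
    intro n
    rw [abs_mul, abs_of_nonneg (by positivity : (0:ℝ) ≤ 1 / (n:ℝ)^(2*k))]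
    exact mul_le_of_le_one_right (by positivity) (Real.abs_cos_le_one _)
  have habs : Summable (fun n : ℕ => |1 / (n : ℝ) ^ (2 * k) * Real.cos (2 * π * n * x)|) :=
    Summable.of_nonneg_of_le (fun n => abs_nonneg _) hterm hsum
  have hbound : |A * P.eval x| ≤ A * P.eval 0 := by
    calc |A * P.eval x| = ‖∑' n : ℕ, (1 / (n : ℝ) ^ (2 * k) * Real.cos (2 * π * n * x))‖ := by
          rw [hxs.tsum_eq, Real.norm_eq_abs]
      _ ≤ ∑' n : ℕ, ‖1 / (n : ℝ) ^ (2 * k) * Real.cos (2 * π * n * x)‖ :=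
          norm_tsum_le_tsum_norm habs
      _ ≤ ∑' n : ℕ, 1 / (n : ℝ) ^ (2 * k) := Summable.tsum_le_tsum hterm habs hsum
      _ = A * P.eval 0 := h0.tsum_eq
  have hP0 : P.eval 0 = ((bernoulli (2*k) : ℚ) : ℝ) := by
    rw [hP, Polynomial.eval_zero_map, Polynomial.bernoulli_eval_zero, eq_ratCast]
  have hfin : |A| * |P.eval x| ≤ |A| * |P.eval 0| := by
    rw [← abs_mul]
    exact hbound.trans ((le_abs_self _).trans (abs_mul A _).le)
  rw [← hP0]
  exact le_of_mul_le_mul_left hfin (abs_pos.mpr hAne)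

lemma integrableOn_aux (k : ℕ) (hk : 1 ≤ k) :
    IntegrableOn (fun t : ℝ => ((1 + t ^ 2) ^ k)⁻¹) (Ioi 0) := by
  have hkc : Continuous (fun t : ℝ => ((1 + t ^ 2) ^ k)⁻¹) := by
    apply Continuous.inv₀ (by continuity)
    intro t; positivity
  refine Integrable.mono (integrable_inv_one_add_sq.integrableOn) hkc.aestronglyMeasurable ?_
  filter_upwards with t
  rw [Real.norm_eq_abs, Real.norm_eq_abs, abs_of_nonneg (by positivity),
    abs_of_nonneg (by positivity)]
  apply inv_anti₀ (by positivity)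
  calc 1 + t ^ 2 = (1 + t ^ 2) ^ 1 := (pow_one _).symm
    _ ≤ (1 + t ^ 2) ^ k := pow_le_pow_right₀ (by nlinarith [sq_nonneg t]) hk

lemma tendsto_aux (k : ℕ) (hk : 1 ≤ k) :
    Filter.Tendsto (fun t : ℝ => t * ((1 + t ^ 2) ^ k)⁻¹) Filter.atTop (nhds 0) := by
  apply squeeze_zero' (g := fun t : ℝ => t⁻¹)
  · filter_upwards [Filter.eventually_gt_atTop 0] with t ht
    positivity
  · filter_upwards [Filter.eventually_gt_atTop 0] with t ht
    rw [mul_inv_le_iff₀ (by positivity), inv_mul_eq_div, le_div_iff₀ ht]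
    calc t * t = t ^ 2 := (sq t).symm
      _ ≤ (1 + t ^ 2) ^ 1 := by rw [pow_one]; linarith
      _ ≤ (1 + t ^ 2) ^ k := pow_le_pow_right₀ (by nlinarith [sq_nonneg t]) hk
  · exact tendsto_inv_atTop_zero

lemma integral_val (k : ℕ) (hk : 1 ≤ k) :
    ∫ t in Ioi (0:ℝ), ((1 + t ^ 2) ^ k)⁻¹ =
      Real.sqrt π / 2 * (Real.Gamma ((k : ℝ) - 1 / 2) / Real.Gamma k) := by
  induction k, hk using Nat.le_induction with
  | base =>
    simp only [pow_one, Nat.cast_one]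
    rw [integral_Ioi_inv_one_add_sq, Real.arctan_zero, sub_zero]
    have h12 : (1:ℝ) - 1/2 = 1/2 := by norm_num
    rw [h12, Real.Gamma_one_half_eq, Real.Gamma_one, div_one, div_mul_eq_mul_div,
      Real.mul_self_sqrt Real.pi_nonneg]
  | succ k hk ih =>
    -- integration by parts: ∫ ((1-2k)·g_k + 2k·g_{k+1}) = 0
    set gk := fun t : ℝ => ((1 + t ^ 2) ^ k)⁻¹ with hgk
    set gk1 := fun t : ℝ => ((1 + t ^ 2) ^ (k + 1))⁻¹ with hgk1
    have hne : ∀ t : ℝ, (1 + t ^ 2) ≠ 0 := fun t => by positivity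
    have hderiv : ∀ t : ℝ, HasDerivAt (fun t : ℝ => t * ((1 + t ^ 2) ^ k)⁻¹)
        ((1 - 2 * k) * gk t + 2 * k * gk1 t) t := by
      intro t
      have h1 : HasDerivAt (fun t : ℝ => (1 + t ^ 2)) (2 * t) t := by
        simpa using ((hasDerivAt_pow 2 t).const_add 1)
      have h2 : HasDerivAt (fun t : ℝ => ((1 + t ^ 2) ^ k)⁻¹)
          (-(↑k * (1 + t ^ 2) ^ (k - 1) * (2 * t)) / ((1 + t ^ 2) ^ k) ^ 2) t :=
        (h1.pow k).inv (pow_ne_zero _ (hne t))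
      have h3 := (hasDerivAt_id t).mul h2
      refine h3.congr_deriv ?_
      obtain ⟨m, rfl⟩ : ∃ m, k = m + 1 := ⟨k - 1, by omega⟩
      simp only [hgk, hgk1, id_eq, add_tsub_cancel_right]
      field_simp
      ring
    have hil : IntegrableOn (fun t : ℝ => (1 - 2 * (k:ℝ)) * gk t + 2 * k * gk1 t) (Ioi 0) := by
      exact ((integrableOn_aux k hk).const_mul _).add ((integrableOn_aux (k+1) (by omega)).const_mul _)
    have hFTC := integral_Ioi_of_hasDerivAt_of_tendsto
      (f := fun t : ℝ => t * ((1 + t ^ 2) ^ k)⁻¹)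
      (a := 0) (m := 0)
      (Continuous.continuousWithinAt (by
        apply continuous_id.mul (Continuous.inv₀ (by continuity) (fun t => pow_ne_zero _ (hne t)))))
      (fun x _ => hderiv x) hil (tendsto_aux k hk)
    simp only [mul_zero, zero_mul, sub_zero, zero_sub, neg_eq_zero] at hFTC
    -- hFTC : ∫ ((1-2k) gk + 2k gk1) = 0
    rw [integral_add ((integrableOn_aux k hk).const_mul _) ((integrableOn_aux (k+1) (by omega)).const_mul _),
      MeasureTheory.integral_const_mul, MeasureTheory.integral_const_mul] at hFTC
    have hIk := ih
    have h2k : (0:ℝ) < 2 * k := by positivity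
    have hsolve : ∫ t in Ioi (0:ℝ), gk1 t = (2 * (k:ℝ) - 1) / (2 * k) * ∫ t in Ioi (0:ℝ), gk t := by
      have := hFTC
      field_simp
      linarith [hFTC]
    rw [hgk1] at hsolve
    rw [hsolve, hIk]
    have hG1 : Real.Gamma ((k:ℝ) + 1 - 1/2) = ((k:ℝ) - 1/2) * Real.Gamma ((k:ℝ) - 1/2) := by
      have := Real.Gamma_add_one (s := (k:ℝ) - 1/2) (by
        have : (1:ℝ) ≤ k := by exact_mod_cast hk
        intro h; nlinarith)
      rw [← this]; ring_nf
    have hG2 : Real.Gamma ((k:ℝ) + 1) = (k:ℝ) * Real.Gamma k := by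
      rw [Real.Gamma_add_one (by positivity)]
    have hGk : Real.Gamma (k:ℝ) ≠ 0 :=
      ne_of_gt (Real.Gamma_pos_of_pos (by positivity))
    push_cast
    rw [hG1, hG2]
    have hkpos : (0:ℝ) < k := by exact_mod_cast hk
    field_simp

lemma integral_shifted (k : ℕ) (hk : 1 ≤ k) {a : ℝ} (ha : 0 < a) :
    ∫ u in Ioi (0:ℝ), ((u ^ 2 + a ^ 2) ^ k)⁻¹ =
      (∫ t in Ioi (0:ℝ), ((1 + t ^ 2) ^ k)⁻¹) / a ^ (2 * k - 1) := by
  have key : ∀ t : ℝ, (((a * t) ^ 2 + a ^ 2) ^ k)⁻¹ = (a ^ (2 * k))⁻¹ * ((1 + t ^ 2) ^ k)⁻¹ := by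
    intro t
    rw [← mul_inv]
    congr 1
    rw [pow_mul, ← mul_pow]
    congr 1
    ring
  have hsub := integral_comp_mul_left_Ioi (fun u : ℝ => ((u ^ 2 + a ^ 2) ^ k)⁻¹) 0 ha
  rw [mul_zero] at hsub
  simp only [key, smul_eq_mul] at hsub
  rw [MeasureTheory.integral_const_mul] at hsub
  have hI := congrArg (fun x => a * x) hsub
  simp only [← mul_assoc, mul_inv_cancel₀ ha.ne', one_mul] at hI
  rw [← hI]
  have hpow : a ^ (2 * k) = a ^ (2 * k - 1) * a := by
    rw [← pow_succ]; congr 1; omega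
  rw [hpow, mul_inv]
  field_simp

/-- The `j`-th term of Stirling's asymptotic series for `log Γ`. -/
noncomputable def T (j : ℕ) (z : ℂ) : ℂ :=
  (bernoulli (2 * j) : ℂ) / ((2 * (j : ℂ)) * (2 * (j : ℂ) - 1) * z ^ (2 * j - 1))

/-- `Rnext k z` is the remainder `R_{k+1}(z)` after `k` terms of Stirling's series. -/
noncomputable def Rnext (k : ℕ) (z : ℂ) : ℂ :=
  -∫ u in Set.Ioi (0 : ℝ),
    ((Polynomial.aeval (Int.fract u) (Polynomial.bernoulli (2 * k)) : ℝ) : ℂ) /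
      ((2 * (k : ℂ)) * ((u : ℂ) + z) ^ (2 * k))

/-- `R k z` is the remainder `R_k(z)` after `k - 1` terms of Stirling's series. -/
noncomputable def R (k : ℕ) (z : ℂ) : ℂ := T k z + Rnext k z

theorem abs_Rnext_le_gamma_ratio_mul (k : ℕ) (hk : 1 ≤ k) (z : ℂ)
    (hz : 0 ≤ z.re) (hz0 : z ≠ 0) :
    ‖Rnext k z‖ ≤
      Real.sqrt π * (Real.Gamma ((k : ℝ) + 1 / 2) / Real.Gamma k) * ‖T k z‖ := by
  set a : ℝ := ‖z‖ with ha
  have hapos : 0 < a := by simpa [ha] using norm_pos_iff.mpr hz0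
  set b : ℝ := ((bernoulli (2 * k) : ℚ) : ℝ) with hb
  set C : ℝ := |b| / (2 * k) with hC
  have hkpos : (0:ℝ) < k := by exact_mod_cast hk
  -- pointwise bound
  have hpt : ∀ u : ℝ, u ∈ Set.Ioi (0:ℝ) →
      ‖((Polynomial.aeval (Int.fract u) (Polynomial.bernoulli (2 * k)) : ℝ) : ℂ) /
        ((2 * (k : ℂ)) * ((u : ℂ) + z) ^ (2 * k))‖ ≤ C * ((u ^ 2 + a ^ 2) ^ k)⁻¹ := by
    intro u hu
    have hu0 : 0 < u := hu
    have hnum : |(Polynomial.aeval (Int.fract u) (Polynomial.bernoulli (2 * k)) : ℝ)| ≤ |b| := by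
      have : (Polynomial.aeval (Int.fract u) (Polynomial.bernoulli (2 * k)) : ℝ) =
          (Polynomial.map (algebraMap ℚ ℝ) (Polynomial.bernoulli (2 * k))).eval (Int.fract u) := by
        rw [Polynomial.eval_map, Polynomial.aeval_def]
      rw [this]
      exact bernoulli_poly_bound (by omega) ⟨Int.fract_nonneg u, (Int.fract_lt_one u).le⟩
    have hk1 : (1:ℝ) ≤ (k:ℝ) := by exact_mod_cast hk
    have h1 : ‖(u:ℂ) + z‖ ^ 2 = (u + z.re) ^ 2 + z.im ^ 2 := by
      rw [Complex.sq_norm, Complex.normSq_apply]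
      simp only [Complex.add_re, Complex.add_im, Complex.ofReal_re, Complex.ofReal_im, zero_add]
      ring
    have h2 : a ^ 2 = z.re ^ 2 + z.im ^ 2 := by
      rw [ha, Complex.sq_norm, Complex.normSq_apply]; ring
    have hA2 : u ^ 2 + a ^ 2 ≤ ‖(u : ℂ) + z‖ ^ 2 := by
      rw [h1, h2]; nlinarith [hz, hu0.le]
    have hden : (u ^ 2 + a ^ 2) ^ k ≤ ‖(u : ℂ) + z‖ ^ (2 * k) := by
      rw [pow_mul]
      exact pow_le_pow_left₀ (by positivity) hA2 k
    have h2k : ‖2 * (k:ℂ)‖ = 2 * (k:ℝ) := by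
      rw [norm_mul, Complex.norm_natCast, Complex.norm_two]
    have hCeq : C * ((u ^ 2 + a ^ 2) ^ k)⁻¹ = |b| / (2 * (k:ℝ) * (u ^ 2 + a ^ 2) ^ k) := by
      rw [hC, division_def, division_def, mul_assoc, ← mul_inv]
    rw [norm_div, Complex.norm_real, Real.norm_eq_abs, norm_mul,
      norm_pow, h2k, hCeq]
    exact div_le_div₀ (abs_nonneg b) hnum (by positivity)
      (mul_le_mul_of_nonneg_left hden (by positivity))
  -- integrability of the dominating function
  have hm : 0 < min (a ^ 2) 1 := lt_min (by positivity) one_pos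
  have hgint : IntegrableOn (fun u : ℝ => C * ((u ^ 2 + a ^ 2) ^ k)⁻¹) (Set.Ioi 0) := by
    apply Integrable.const_mul
    have hgc : Continuous (fun u : ℝ => ((u ^ 2 + a ^ 2) ^ k)⁻¹) := by
      apply Continuous.inv₀ (by continuity)
      intro t; positivity
    refine Integrable.mono ((integrableOn_aux k hk).const_mul ((min (a ^ 2) 1) ^ k)⁻¹)
      hgc.aestronglyMeasurable ?_
    filter_upwards with u
    rw [Real.norm_eq_abs, Real.norm_eq_abs, abs_of_nonneg (by positivity),
      abs_of_nonneg (by positivity), ← mul_inv]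
    apply inv_anti₀ (by positivity)
    rw [← mul_pow]
    apply pow_le_pow_left₀ (by positivity)
    rcases le_total (a ^ 2) 1 with h | h
    · rw [min_eq_left h]; nlinarith [sq_nonneg u]
    · rw [min_eq_right h]; nlinarith [sq_nonneg u]
  -- norm of the integral is bounded by the integral of the dominating function
  have hRle : ‖Rnext k z‖ ≤ ∫ u in Set.Ioi (0:ℝ), C * ((u ^ 2 + a ^ 2) ^ k)⁻¹ := by
    calc ‖Rnext k z‖
        = ‖∫ u in Set.Ioi (0:ℝ),
            ((Polynomial.aeval (Int.fract u) (Polynomial.bernoulli (2 * k)) : ℝ) : ℂ) /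
              ((2 * (k : ℂ)) * ((u : ℂ) + z) ^ (2 * k))‖ := by
          rw [Rnext, norm_neg]
      _ ≤ ∫ u in Set.Ioi (0:ℝ), C * ((u ^ 2 + a ^ 2) ^ k)⁻¹ :=
          MeasureTheory.norm_integral_le_of_norm_le hgint
            ((ae_restrict_iff' measurableSet_Ioi).mpr (Filter.Eventually.of_forall hpt))
  have hgval : ∫ u in Set.Ioi (0:ℝ), C * ((u ^ 2 + a ^ 2) ^ k)⁻¹ =
      C * ((Real.sqrt π / 2 * (Real.Gamma ((k : ℝ) - 1 / 2) / Real.Gamma k)) / a ^ (2 * k - 1)) := by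
    rw [MeasureTheory.integral_const_mul, integral_shifted k hk hapos, integral_val k hk]
  -- compute |T k z|
  have hT : ‖T k z‖ = |b| / (2 * (k:ℝ) * (2 * (k:ℝ) - 1) * a ^ (2 * k - 1)) := by
    rw [T, norm_div, norm_mul, norm_mul, norm_pow]
    have hnum : (bernoulli (2 * k) : ℂ) = ((b : ℝ) : ℂ) := by rw [hb]; push_cast; rfl
    have h2k : ‖2 * (k:ℂ)‖ = 2 * (k:ℝ) := by
      rw [norm_mul, Complex.norm_natCast, Complex.norm_two]
    have h2k1 : ‖2 * (k:ℂ) - 1‖ = 2 * (k:ℝ) - 1 := by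
      have he : 2 * (k:ℂ) - 1 = (((2 * (k:ℝ) - 1 : ℝ)) : ℂ) := by push_cast; ring
      rw [he, Complex.norm_real, Real.norm_eq_abs, abs_of_pos (by nlinarith [(Nat.one_le_cast (α := ℝ)).mpr hk])]
    rw [hnum, Complex.norm_real, Real.norm_eq_abs, h2k, h2k1, ← ha]
  -- final computation
  rw [hT]
  refine hRle.trans ?_
  rw [hgval]
  apply le_of_eq
  have hG : Real.Gamma ((k:ℝ) + 1 / 2) = ((k:ℝ) - 1 / 2) * Real.Gamma ((k:ℝ) - 1 / 2) := by
    have h := Real.Gamma_add_one (s := (k:ℝ) - 1 / 2) (by intro hcon; nlinarith [(Nat.one_le_cast (α := ℝ)).mpr hk])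
    have he : (k:ℝ) - 1 / 2 + 1 = (k:ℝ) + 1 / 2 := by ring
    rw [he] at h
    exact h
  have hGk : Real.Gamma (k:ℝ) ≠ 0 := ne_of_gt (Real.Gamma_pos_of_pos hkpos)
  have h2k1pos : (0:ℝ) < 2 * (k:ℝ) - 1 := by
    have : (1:ℝ) ≤ k := by exact_mod_cast hk
    linarith
  rw [hG, hC]
  have hane : a ^ (2 * k - 1) ≠ 0 := by positivity
  field_simp
end

section
/- Let k ≥ 1 be an integer and let z ∈ ℂ satisfy Re(z) ≥ 0 and z ≠ 0. Then |R_k(z)| ≤ (√π · Γ(k+1/2)/Γ(k) + 1) · |T_k(z)|. -/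
open MeasureTheory Real

open Filter Set Topology
open scoped Nat

lemma bern_bound {k : ℕ} (hk : k ≠ 0) {x : ℝ} (hx : x ∈ Set.Icc (0:ℝ) 1) :
    |(Polynomial.map (algebraMap ℚ ℝ) (Polynomial.bernoulli (2 * k))).eval x|
      ≤ |(bernoulli (2 * k) : ℝ)| := by
  set B : ℝ → ℝ := fun y => (Polynomial.map (algebraMap ℚ ℝ) (Polynomial.bernoulli (2 * k))).eval y
  set c : ℝ := (2 * π) ^ (2 * k) / 2 / (2 * k)! with hc
  have hcpos : 0 < c := by positivity
  have hS := hasSum_one_div_nat_pow_mul_cos hk hx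
  have hZ := hasSum_zeta_nat (k := k) hk
  set f : ℕ → ℝ := fun n => 1 / (n : ℝ) ^ (2 * k) * Real.cos (2 * π * n * x) with hf
  set g : ℕ → ℝ := fun n => 1 / (n : ℝ) ^ (2 * k) with hg
  have hfg : ∀ n, |f n| ≤ g n := by
    intro n
    have h1 : |Real.cos (2 * π * n * x)| ≤ 1 := Real.abs_cos_le_one _
    have h2 : (0:ℝ) ≤ 1 / (n : ℝ) ^ (2 * k) := by positivity
    calc |f n| = (1 / (n : ℝ) ^ (2*k)) * |Real.cos (2 * π * n * x)| := by
          rw [hf, abs_mul, abs_of_nonneg h2]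
      _ ≤ (1 / (n : ℝ) ^ (2*k)) * 1 := by gcongr
      _ = g n := by simp [hg]
  have hsumg : Summable g := hZ.summable
  have hsumf : Summable fun n => |f n| :=
    hsumg.of_nonneg_of_le (fun n => abs_nonneg _) hfg
  have key : |((-1 : ℝ) ^ (k + 1) * (2 * π) ^ (2 * k) / 2 / (2 * k)! * B x)|
      ≤ (-1 : ℝ) ^ (k + 1) * (2:ℝ) ^ (2 * k - 1) * π ^ (2 * k) * bernoulli (2 * k) / (2 * k)! := by
    calc |((-1:ℝ) ^ (k+1) * (2*π) ^ (2*k) / 2 / (2*k)! * B x)| = |∑' n, f n| := by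
          rw [hS.tsum_eq]
      _ ≤ ∑' n, |f n| := by
          simpa using norm_tsum_le_tsum_norm (f := f) (by simpa using hsumf)
      _ ≤ ∑' n, g n := Summable.tsum_le_tsum hfg hsumf hsumg
      _ = _ := hZ.tsum_eq
  have h2 : (2:ℝ) ^ (2 * k - 1) = 2 ^ (2 * k) / 2 := by
    rw [eq_div_iff (two_ne_zero), ← pow_succ]
    congr 1
    omega
  have hLHS : |((-1:ℝ) ^ (k+1) * (2*π) ^ (2*k) / 2 / (2*k)! * B x)| = c * |B x| := by
    rw [abs_mul, abs_div, abs_div, abs_mul, abs_pow, abs_pow, abs_neg, abs_one, one_pow,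
      one_mul, abs_mul, abs_two, abs_of_nonneg pi_pos.le]
    simp [hc, Nat.abs_cast]
  have hRHS : (-1:ℝ) ^ (k+1) * (2:ℝ) ^ (2*k-1) * π ^ (2*k) * bernoulli (2*k) / (2*k)!
      ≤ c * |(bernoulli (2*k) : ℝ)| := by
    rw [h2]
    have : (-1:ℝ) ^ (k+1) * (2 ^ (2*k) / 2) * π ^ (2*k) * bernoulli (2*k) / (2*k)!
        = c * ((-1:ℝ) ^ (k+1) * bernoulli (2*k)) := by
      rw [hc]; rw [mul_pow]; ring
    rw [this]
    gcongr
    calc (-1:ℝ) ^ (k+1) * bernoulli (2*k) ≤ |(-1:ℝ) ^ (k+1) * bernoulli (2*k)| := le_abs_self _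
      _ = |(bernoulli (2*k) : ℝ)| := by rw [abs_mul, abs_pow, abs_neg, abs_one, one_pow, one_mul]
  have := le_trans (hLHS ▸ key) hRHS
  exact le_of_mul_le_mul_left this hcpos

noncomputable def Jint (j : ℕ) : ℝ := ∫ x in Ioi (0:ℝ), ((1 + x ^ 2) ^ j)⁻¹

lemma g_integrable {j : ℕ} (hj : j ≠ 0) : Integrable (fun x : ℝ => ((1 + x ^ 2) ^ j)⁻¹) := by
  apply integrable_inv_one_add_sq.mono'
  · exact (((continuous_const.add (continuous_pow 2)).pow j).inv₀
      (fun x => by show ((1:ℝ) + x ^ 2) ^ j ≠ 0; positivity)).aestronglyMeasurable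
  · filter_upwards with x
    have h1 : (1:ℝ) + x ^ 2 ≤ (1 + x ^ 2) ^ j := le_self_pow₀ (by nlinarith) hj
    rw [Real.norm_eq_abs, abs_of_nonneg (by positivity)]
    exact inv_anti₀ (by positivity) h1

lemma J_one : Jint 1 = π / 2 := by
  simp only [Jint, pow_one]
  rw [integral_Ioi_inv_one_add_sq, Real.arctan_zero, sub_zero]

lemma J_rec (m : ℕ) : (2 * ((m:ℝ) + 1)) * Jint (m + 2) = (2 * ((m:ℝ) + 1) - 1) * Jint (m + 1) := by
  set f : ℝ → ℝ := fun x => x / (1 + x ^ 2) ^ (m + 1) with hf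
  set f' : ℝ → ℝ := fun x => (1 - 2 * ((m:ℝ) + 1)) * ((1 + x ^ 2) ^ (m + 1))⁻¹
      + (2 * ((m:ℝ) + 1)) * ((1 + x ^ 2) ^ (m + 2))⁻¹ with hf'
  have hderiv : ∀ x : ℝ, HasDerivAt f (f' x) x := by
    intro x
    have hpos : (0:ℝ) < 1 + x ^ 2 := by positivity
    have h1 : HasDerivAt (fun y : ℝ => 1 + y ^ 2) (2 * x) x := by
      simpa using (hasDerivAt_pow 2 x).const_add 1
    have hv : HasDerivAt (fun y : ℝ => (1 + y ^ 2) ^ (m + 1))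
        ((m + 1 : ℕ) * (1 + x ^ 2) ^ m * (2 * x)) x := by
      simpa using h1.fun_pow (m + 1)
    have hd := (hasDerivAt_id' x).fun_div hv (pow_ne_zero _ hpos.ne')
    refine hd.congr_deriv ?_
    rw [hf']
    field_simp
    push_cast
    ring
  have htend : Tendsto f atTop (𝓝 0) := by
    apply tendsto_of_tendsto_of_tendsto_of_le_of_le' tendsto_const_nhds tendsto_inv_atTop_zero
    · filter_upwards [eventually_ge_atTop (1:ℝ)] with x hx
      positivity
    · filter_upwards [eventually_ge_atTop (1:ℝ)] with x hx
      have hxpos : (0:ℝ) < x := by linarith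
      rw [hf, div_le_iff₀ (by positivity)]
      have h2 : x ^ 2 ≤ (1 + x ^ 2) ^ (m + 1) :=
        le_trans (by nlinarith) (le_self_pow₀ (by nlinarith) (Nat.succ_ne_zero m))
      calc x = x⁻¹ * x ^ 2 := by field_simp [sq]
        _ ≤ x⁻¹ * (1 + x ^ 2) ^ (m + 1) := by gcongr
  have hint1 : Integrable (fun x : ℝ => ((1 + x ^ 2) ^ (m + 1))⁻¹) := g_integrable (Nat.succ_ne_zero m)
  have hint2 : Integrable (fun x : ℝ => ((1 + x ^ 2) ^ (m + 2))⁻¹) := g_integrable (by omega)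
  have hfint : IntegrableOn f' (Ioi (0:ℝ)) :=
    (((hint1.const_mul _).add (hint2.const_mul _))).integrableOn
  have hcalc := integral_Ioi_of_hasDerivAt_of_tendsto' (a := 0)
    (fun x _ => hderiv x) hfint htend
  have hf0 : f 0 = 0 := by simp [hf]
  rw [hf0, zero_sub, neg_zero] at hcalc
  have hsplit : ∫ x in Ioi (0:ℝ), f' x
      = (1 - 2 * ((m:ℝ) + 1)) * Jint (m + 1) + (2 * ((m:ℝ) + 1)) * Jint (m + 2) := by
    rw [hf']
    rw [MeasureTheory.integral_add (hint1.const_mul _).integrableOn (hint2.const_mul _).integrableOn,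
      integral_const_mul, integral_const_mul]
    rfl
  rw [hsplit] at hcalc
  linarith

lemma J_val (m : ℕ) : Jint (m + 1)
    = Real.sqrt π / 2 * (Real.Gamma ((m:ℝ) + 1/2) / Real.Gamma ((m:ℝ) + 1)) := by
  induction m with
  | zero =>
      rw [J_one]
      norm_num [Real.Gamma_one_half_eq, Real.Gamma_one]
      rw [div_mul_eq_mul_div, Real.mul_self_sqrt pi_pos.le]
  | succ n ih =>
      have hrec := J_rec n
      have h1 : Real.Gamma ((n:ℝ) + 1 + 1/2) = ((n:ℝ) + 1/2) * Real.Gamma ((n:ℝ) + 1/2) := by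
        rw [show (n:ℝ) + 1 + 1/2 = ((n:ℝ) + 1/2) + 1 by ring, Real.Gamma_add_one (by positivity)]
      have h2 : Real.Gamma ((n:ℝ) + 1 + 1) = ((n:ℝ) + 1) * Real.Gamma ((n:ℝ) + 1) := by
        rw [Real.Gamma_add_one (by positivity)]
      have hpos1 : (0:ℝ) < 2 * ((n:ℝ) + 1) := by positivity
      have hJ : Jint (n + 2) = (2 * ((n:ℝ) + 1) - 1) / (2 * ((n:ℝ) + 1)) * Jint (n + 1) := by
        rw [div_mul_eq_mul_div, eq_comm, div_eq_iff hpos1.ne']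
        linarith
      have hG1 : 0 < Real.Gamma ((n:ℝ) + 1) := Real.Gamma_pos_of_pos (by positivity)
      have hcast : ((n + 1 : ℕ) : ℝ) = (n:ℝ) + 1 := by push_cast; ring
      rw [show n + 1 + 1 = n + 2 from rfl, hJ, ih, hcast, h1, h2]
      have hne : ((n:ℝ) + 1) ≠ 0 := by positivity
      field_simp
      ring

theorem abs_R_le_gamma_ratio_add_one_mul (k : ℕ) (hk : 1 ≤ k) (z : ℂ)
    (hz : 0 ≤ z.re) (hz0 : z ≠ 0) :
    ‖R k z‖ ≤
      (Real.sqrt π * (Real.Gamma ((k : ℝ) + 1 / 2) / Real.Gamma k) + 1) * ‖T k z‖ := by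
  obtain ⟨m, rfl⟩ : ∃ m, k = m + 1 := ⟨k - 1, by omega⟩
  set c : ℝ := ‖z‖ with hcdef
  have hc : 0 < c := norm_pos_iff.mpr hz0
  set Bv : ℝ := |(bernoulli (2 * (m + 1)) : ℝ)| with hBv
  -- |T|
  have habsT : ‖T (m+1) z‖
      = Bv / ((2*((m:ℝ)+1)) * (2*((m:ℝ)+1) - 1) * c ^ (2*m+1)) := by
    unfold T
    rw [show 2*(m+1)-1 = 2*m+1 from by omega]
    rw [norm_div, norm_mul, norm_mul, norm_pow]
    rw [show ((bernoulli (2*(m+1)) : ℚ) : ℂ) = (((bernoulli (2*(m+1)) : ℚ) : ℝ) : ℂ) by norm_cast]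
    rw [show ((2:ℂ)*(((m:ℕ)+1:ℕ):ℂ) - 1) = (((2*((m:ℝ)+1) - 1) : ℝ) : ℂ) by push_cast; ring]
    rw [show ((2:ℂ)*(((m:ℕ)+1:ℕ):ℂ)) = (((2*((m:ℝ)+1)) : ℝ) : ℂ) by push_cast; ring]
    rw [Complex.norm_real, Complex.norm_real, Complex.norm_real, Real.norm_eq_abs, Real.norm_eq_abs, Real.norm_eq_abs,
      abs_of_nonneg (show (0:ℝ) ≤ 2*((m:ℝ)+1) by positivity),
      abs_of_nonneg (show (0:ℝ) ≤ 2*((m:ℝ)+1)-1 by linarith [Nat.cast_nonneg (α := ℝ) m])]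
  -- pointwise bound
  set g : ℝ → ℝ := fun u => Bv / ((2*((m:ℝ)+1)) * ((u^2 + c^2) ^ (m+1))) with hg
  have hbound : ∀ u ∈ Ioi (0:ℝ), ‖((Polynomial.aeval (Int.fract u) (Polynomial.bernoulli (2 * (m+1))) : ℝ) : ℂ) /
      ((2 * ((m+1 : ℕ) : ℂ)) * ((u : ℂ) + z) ^ (2 * (m+1)))‖ ≤ g u := by
    intro u hu
    rw [norm_div, Complex.norm_real, norm_mul, norm_pow]
    have hnum : ‖(Polynomial.aeval (Int.fract u) (Polynomial.bernoulli (2 * (m+1))) : ℝ)‖ ≤ Bv := by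
      rw [Real.norm_eq_abs, Polynomial.aeval_def, Polynomial.eval₂_eq_eval_map]
      exact bern_bound (Nat.succ_ne_zero m) ⟨Int.fract_nonneg u, (Int.fract_lt_one u).le⟩
    have hsq : u^2 + c^2 ≤ ‖(u:ℂ) + z‖^2 := by
      have hc2 : c^2 = z.re^2 + z.im^2 := by
        rw [hcdef, Complex.sq_norm, Complex.normSq_apply]; ring
      have h1 : ‖(u:ℂ)+z‖^2 = (u + z.re)^2 + z.im^2 := by
        rw [Complex.sq_norm, Complex.normSq_apply, Complex.add_re,
          Complex.add_im, Complex.ofReal_re, Complex.ofReal_im, zero_add]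
        ring
      rw [h1]
      have hu' : (0:ℝ) < u := hu
      nlinarith
    have hden : (2*((m:ℝ)+1)) * ((u^2 + c^2) ^ (m+1)) ≤ ‖(2 * ((m+1 : ℕ) : ℂ))‖ * ‖(u:ℂ) + z‖ ^ (2 * (m+1)) := by
      have h1 : ‖(2 * ((m+1 : ℕ) : ℂ))‖ = 2*((m:ℝ)+1) := by
        rw [show ((2:ℂ)*(((m:ℕ)+1:ℕ):ℂ)) = (((2*((m:ℝ)+1)) : ℝ) : ℂ) by push_cast; ring,
          Complex.norm_real, Real.norm_of_nonneg (by positivity)]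
      rw [h1, show 2*(m+1) = (m+1)*2 by ring, pow_mul']
      gcongr <;> first | positivity | exact hsq
    calc ‖(Polynomial.aeval (Int.fract u) (Polynomial.bernoulli (2 * (m+1))) : ℝ)‖ /
          (‖(2 * ((m+1 : ℕ) : ℂ))‖ * ‖(u:ℂ) + z‖ ^ (2 * (m+1)))
        ≤ Bv / ((2*((m:ℝ)+1)) * ((u^2 + c^2) ^ (m+1))) := by
          apply div_le_div₀ (by positivity) hnum (by positivity) hden
      _ = g u := rfl
  -- integrability of g
  have hint0 : Integrable (fun u : ℝ => ((u^2 + c^2) ^ (m+1))⁻¹) := by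
    have h := (g_integrable (Nat.succ_ne_zero m)).comp_div (R := c) hc.ne'
    have h2 := h.const_mul ((c ^ (2*(m+1)))⁻¹)
    apply h2.congr
    filter_upwards with x
    rw [← mul_inv, show (2*(m+1)) = (m+1)*2 by ring, pow_mul', ← mul_pow]
    congr 2
    field_simp
    ring
  have hgint : IntegrableOn g (Ioi (0:ℝ)) := by
    have : g = fun u => (Bv / (2*((m:ℝ)+1))) * ((u^2 + c^2) ^ (m+1))⁻¹ := by
      funext u; rw [hg]; field_simp
    rw [this]
    exact (hint0.const_mul _).integrableOn
  -- value of ∫ g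
  have hsub : ∫ u in Ioi (0:ℝ), ((u^2 + c^2) ^ (m+1))⁻¹ = (c ^ (2*m+1))⁻¹ * Jint (m+1) := by
    have h := integral_comp_mul_left_Ioi (fun y : ℝ => ((y^2 + c^2) ^ (m+1))⁻¹) 0 hc
    rw [mul_zero] at h
    have hL : ∫ x in Ioi (0:ℝ), (((c*x)^2 + c^2) ^ (m+1))⁻¹
        = (c ^ (2*(m+1)))⁻¹ * Jint (m+1) := by
      unfold Jint
      rw [← MeasureTheory.integral_const_mul]
      apply setIntegral_congr_fun measurableSet_Ioi
      intro x _
      show (((c*x)^2 + c^2) ^ (m+1))⁻¹ = (c ^ (2*(m+1)))⁻¹ * ((1 + x^2) ^ (m+1))⁻¹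
      rw [← mul_inv, show (2*(m+1)) = (m+1)*2 by ring, pow_mul', ← mul_pow]
      congr 2
      ring
    rw [hL] at h
    have := h.symm
    rw [smul_eq_mul] at this
    -- this : c⁻¹ • ∫ = (c^(2(m+1)))⁻¹ * Jint
    have hJ : ∫ u in Ioi (0:ℝ), ((u^2 + c^2) ^ (m+1))⁻¹
        = c * ((c ^ (2*(m+1)))⁻¹ * Jint (m+1)) := by
      field_simp at this ⊢
      linarith
    rw [hJ, show 2*(m+1) = (2*m+1)+1 by ring, pow_succ]
    field_simp
  have hgval : ∫ u in Ioi (0:ℝ), g u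
      = Bv / (2*((m:ℝ)+1)) * ((c ^ (2*m+1))⁻¹ * Jint (m+1)) := by
    have : ∀ u : ℝ, g u = (Bv / (2*((m:ℝ)+1))) * ((u^2 + c^2) ^ (m+1))⁻¹ := by
      intro u; rw [hg]; field_simp
    rw [MeasureTheory.setIntegral_congr_fun measurableSet_Ioi (fun u _ => this u),
      MeasureTheory.integral_const_mul, hsub]
  -- norm of Rnext
  have hRn : ‖Rnext (m+1) z‖ ≤ ∫ u in Ioi (0:ℝ), g u := by
    unfold Rnext
    rw [norm_neg]
    refine le_trans (norm_integral_le_integral_norm _) ?_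
    apply integral_mono_of_nonneg (Filter.Eventually.of_forall fun u => norm_nonneg _) hgint
    filter_upwards [ae_restrict_mem measurableSet_Ioi] with u hu
    exact hbound u hu
  -- Gamma arithmetic
  have hG1 : Real.Gamma (((m:ℝ)+1) + 1/2) = ((m:ℝ) + 1/2) * Real.Gamma ((m:ℝ) + 1/2) := by
    rw [show ((m:ℝ)+1) + 1/2 = ((m:ℝ) + 1/2) + 1 by ring, Real.Gamma_add_one (by positivity)]
  have hGpos : 0 < Real.Gamma ((m:ℝ) + 1) := Real.Gamma_pos_of_pos (by positivity)
  have hGpos2 : 0 < Real.Gamma ((m:ℝ) + 1/2) := Real.Gamma_pos_of_pos (by positivity)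
  have hcast : (((m:ℕ)+1:ℕ) : ℝ) = (m:ℝ) + 1 := by push_cast; ring
  have hfinal : ∫ u in Ioi (0:ℝ), g u
      = Real.sqrt π * (Real.Gamma ((((m:ℕ)+1:ℕ)) + 1/2) / Real.Gamma (((m:ℕ)+1:ℕ))) *
        ‖T (m+1) z‖ := by
    rw [hgval, J_val, habsT, hcast, hG1]
    have h2m : (2*((m:ℝ)+1) - 1) = 2 * ((m:ℝ) + 1/2) := by ring
    rw [h2m]
    have hcpow : (0:ℝ) < c ^ (2*m+1) := by positivity
    field_simp
  -- conclude
  calc ‖R (m+1) z‖ ≤ ‖T (m+1) z‖ + ‖Rnext (m+1) z‖ := by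
        unfold R; exact norm_add_le _ _
    _ ≤ ‖T (m+1) z‖ +
        Real.sqrt π * (Real.Gamma ((((m:ℕ)+1:ℕ)) + 1/2) / Real.Gamma (((m:ℕ)+1:ℕ))) *
          ‖T (m+1) z‖ := by
        have := le_trans hRn (le_of_eq hfinal)
        linarith
    _ = (Real.sqrt π * (Real.Gamma ((((m:ℕ)+1:ℕ):ℝ) + 1/2) / Real.Gamma (((m:ℕ)+1:ℕ))) + 1) *
          ‖T (m+1) z‖ := by ring
end

section
/- Let k ≥ 1 be an integer and let z ∈ ℂ satisfy Re(z) ≥ 0 and z ≠ 0. Then |R_{k+1}(z)| < √(πk) · |T_k(z)|. -/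
open MeasureTheory Real

open Filter Topology Finset

lemma bern_bound_s2 (m : ℕ) (hm : 1 ≤ m) :
    ((bernoulli (2*m) : ℝ) ≠ 0) ∧
      ∀ x ∈ Set.Icc (0:ℝ) 1, |bernoulliFun (2*m) x| ≤ |(bernoulli (2*m) : ℝ)| := by
  set K := 2*m with hK
  have hK2 : 2 ≤ K := by omega
  set r : ℤ → ℝ := fun n => ((n:ℝ)^K)⁻¹ with hr
  have hrnn : ∀ n, 0 ≤ r n := by
    intro n
    have : (0:ℝ) ≤ (n:ℝ)^K := by rw [hK, pow_mul]; positivity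
    simp only [hr]; positivity
  have hnorm : ∀ (n : ℤ) (y : UnitAddCircle), ‖1 / (n:ℂ)^K * fourier n y‖ = r n := by
    intro n y
    have h1 : ‖(fourier n y : ℂ)‖ = 1 := Circle.norm_coe _
    rw [norm_mul, h1, mul_one, norm_div, norm_one, norm_pow]
    simp only [hr, one_div]
    congr 1
    rw [Complex.norm_intCast, hK, pow_mul, pow_mul, sq_abs]
  have hs : ∀ x : ℝ, x ∈ Set.Icc (0:ℝ) 1 →
      HasSum (fun n : ℤ => 1 / (n:ℂ)^K * fourier n (↑x : UnitAddCircle))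
        (-(2 * π * Complex.I)^K / (Nat.factorial K) * bernoulliFun K x) := fun x hx =>
    hasSum_one_div_pow_mul_fourier_mul_bernoulliFun hK2 hx
  have hs0 := hs 0 (by norm_num)
  have h0terms : (fun n : ℤ => 1 / (n:ℂ)^K * fourier n ((0:ℝ) : UnitAddCircle))
      = fun n : ℤ => ((r n : ℝ) : ℂ) := by
    funext n
    have h00 : ((0:ℝ) : UnitAddCircle) = 0 := by norm_num
    rw [h00, fourier_eval_zero, mul_one]
    simp only [hr]
    push_cast
    rw [one_div]
  rw [h0terms] at hs0
  set S0 : ℂ := -(2 * π * Complex.I)^K / (Nat.factorial K) * bernoulliFun K 0 with hS0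
  have hsr : HasSum r S0.re := by
    have := Complex.hasSum_re hs0
    simpa using this
  have him : S0.im = 0 := by
    have := Complex.hasSum_im hs0
    simp only [Complex.ofReal_im] at this
    exact (this.unique hasSum_zero)
  have hS0eq : S0 = ((S0.re : ℝ) : ℂ) := by
    apply Complex.ext <;> simp [him]
  have h1le : (1:ℝ) ≤ S0.re := by
    have := le_hasSum hsr 1 (fun n _ => hrnn n)
    simpa [hr] using this
  set C : ℝ := ‖(-(2 * π * Complex.I)^K / ((Nat.factorial K : ℂ)) : ℂ)‖ with hC
  have hCpos : 0 < C := by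
    rw [hC]
    apply norm_pos_iff.mpr
    apply div_ne_zero
    · refine neg_ne_zero.mpr (pow_ne_zero _ ?_)
      simp [Real.pi_ne_zero, Complex.I_ne_zero]
    · exact_mod_cast Nat.cast_ne_zero.mpr (Nat.factorial_ne_zero K)
  have hnormS : ∀ x : ℝ,
      ‖(-(2 * π * Complex.I)^K / (Nat.factorial K) * bernoulliFun K x : ℂ)‖
        = C * |bernoulliFun K x| := by
    intro x
    rw [norm_mul, hC, Complex.norm_real, Real.norm_eq_abs]
  have hCB0 : C * |bernoulliFun K 0| = S0.re := by
    rw [← hnormS 0, ← hS0, hS0eq, Complex.norm_real, Real.norm_eq_abs,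
      abs_of_nonneg (by linarith)]
    simp
  have hbound : ∀ x ∈ Set.Icc (0:ℝ) 1, |bernoulliFun K x| ≤ |bernoulliFun K 0| := by
    intro x hx
    have hsx := hs x hx
    have h2 : ‖(-(2 * π * Complex.I)^K / (Nat.factorial K) * bernoulliFun K x : ℂ)‖
        ≤ S0.re := by
      rw [← hsx.tsum_eq]
      calc ‖∑' n : ℤ, 1 / (n:ℂ)^K * fourier n (↑x : UnitAddCircle)‖
          ≤ ∑' n : ℤ, ‖1 / (n:ℂ)^K * fourier n (↑x : UnitAddCircle)‖ :=
            norm_tsum_le_tsum_norm (by simpa only [hnorm] using hsr.summable)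
        _ = ∑' n : ℤ, r n := by simp only [hnorm]
        _ = S0.re := hsr.tsum_eq
    rw [hnormS x, ← hCB0] at h2
    exact le_of_mul_le_mul_left h2 hCpos
  have hB0ne : bernoulliFun K 0 ≠ 0 := by
    intro h
    rw [h, abs_zero, mul_zero] at hCB0
    linarith
  rw [bernoulliFun_eval_zero] at hbound hB0ne
  exact ⟨by exact_mod_cast hB0ne, hbound⟩

noncomputable def Istir (k : ℕ) : ℝ := ∫ t in Set.Ioi (0:ℝ), ((1+t^2)^k)⁻¹

lemma integrableOn_I (k : ℕ) (hk : 1 ≤ k) :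
    IntegrableOn (fun t : ℝ => ((1+t^2)^k)⁻¹) (Set.Ioi 0) := by
  apply Integrable.integrableOn
  apply integrable_inv_one_add_sq.mono
  · apply Continuous.aestronglyMeasurable
    fun_prop (disch := intros; positivity)
  · filter_upwards with t
    rw [Real.norm_eq_abs, Real.norm_eq_abs, abs_of_nonneg (by positivity),
      abs_of_nonneg (by positivity)]
    apply inv_anti₀ (by positivity)
    calc 1 + t^2 = (1+t^2)^1 := (pow_one _).symm
      _ ≤ (1+t^2)^k := pow_le_pow_right₀ (by nlinarith [sq_nonneg t]) hk

lemma Istir_one : Istir 1 = π/2 := by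
  rw [Istir]
  have := integral_Ioi_of_hasDerivAt_of_tendsto
    (f := fun t : ℝ => arctan t) (f' := fun t : ℝ => ((1+t^2)^1)⁻¹) (a := 0)
    (by apply Continuous.continuousWithinAt; exact continuous_arctan)
    (fun x _ => by simpa [pow_one] using (hasDerivAt_arctan x))
    (integrableOn_I 1 le_rfl)
    (tendsto_arctan_atTop.mono_right nhdsWithin_le_nhds)
  rw [this]; simp

lemma Istir_succ (k : ℕ) (hk : 1 ≤ k) :
    Istir (k+1) = (2*k-1)/(2*k) * Istir k := by
  obtain ⟨j, rfl⟩ : ∃ j, k = j + 1 := ⟨k-1, by omega⟩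
  set k := j + 1
  set f : ℝ → ℝ := fun t => t * ((1+t^2)^k)⁻¹ with hf
  set f' : ℝ → ℝ := fun t => (1-2*(k:ℝ)) * ((1+t^2)^k)⁻¹ + 2*(k:ℝ) * ((1+t^2)^(k+1))⁻¹ with hf'
  have hderiv : ∀ t : ℝ, HasDerivAt f (f' t) t := by
    intro t
    have hA : (0:ℝ) < 1 + t^2 := by positivity
    have h1 : HasDerivAt (fun t : ℝ => 1 + t^2) (2*t) t := by
      simpa using ((hasDerivAt_pow 2 t).const_add 1)
    have h2 : HasDerivAt (fun t : ℝ => ((1+t^2)^k)⁻¹)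
        (-((k:ℝ) * (1+t^2)^(k-1) * (2*t)) / ((1+t^2)^k)^2) t :=
      (((hasDerivAt_pow k _).comp t h1)).inv (pow_ne_zero _ hA.ne')
    have h3 := (hasDerivAt_id t).mul h2
    convert h3 using 1
    show f' t = 1 * ((1+t^2)^k)⁻¹ + t * (-((k:ℝ) * (1+t^2)^(k-1) * (2*t)) / ((1+t^2)^k)^2)
    rw [hf']
    show (1-2*(k:ℝ)) * ((1+t^2)^(j+1))⁻¹ + 2*(k:ℝ) * ((1+t^2)^(j+1+1))⁻¹
      = 1 * ((1+t^2)^(j+1))⁻¹ + t * (-((k:ℝ) * (1+t^2)^(j+1-1) * (2*t)) / ((1+t^2)^(j+1))^2)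
    have hj : j + 1 - 1 = j := rfl
    rw [hj]
    have hAne : (1+t^2) ≠ 0 := hA.ne'
    push_cast
    field_simp
    ring
    · rfl
    · rfl
    · exact funext fun s => rfl
  -- integrability of f'
  have hint : IntegrableOn f' (Set.Ioi 0) := by
    apply Integrable.add
    · exact (integrableOn_I k (by omega)).const_mul _
    · exact (integrableOn_I (k+1) (by omega)).const_mul _
  -- limit of f at infinity
  have hlim : Tendsto f atTop (nhds 0) := by
    have hb : ∀ᶠ t in atTop, |f t| ≤ t⁻¹ := by
      filter_upwards [eventually_ge_atTop (1:ℝ)] with t ht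
      have hA : (0:ℝ) < 1 + t^2 := by positivity
      have ht0 : (0:ℝ) < t := by linarith
      rw [hf, abs_of_nonneg (by positivity)]
      show t * ((1+t^2)^k)⁻¹ ≤ t⁻¹
      rw [mul_inv_le_iff₀ (by positivity)]
      calc t = t⁻¹ * t^2 := by field_simp [pow_two]
        _ ≤ t⁻¹ * (1+t^2)^k := by
            apply mul_le_mul_of_nonneg_left _ (by positivity)
            calc t^2 ≤ (1+t^2)^1 := by nlinarith
              _ ≤ (1+t^2)^k := pow_le_pow_right₀ (by nlinarith) (by omega)
    exact squeeze_zero_norm' (by simpa [Real.norm_eq_abs] using hb) tendsto_inv_atTop_zero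
  have h0 := integral_Ioi_of_hasDerivAt_of_tendsto (a := 0)
    ((hderiv 0).continuousAt.continuousWithinAt)
    (fun x _ => hderiv x) hint hlim
  have hf0 : f 0 = 0 := by simp [hf]
  rw [hf0, sub_zero] at h0
  have hsplit : ∫ t in Set.Ioi (0:ℝ), f' t
      = (1-2*(k:ℝ)) * Istir k + 2*(k:ℝ) * Istir (k+1) := by
    rw [hf']
    rw [MeasureTheory.integral_add ((integrableOn_I k (by omega)).const_mul _)
      ((integrableOn_I (k+1) (by omega)).const_mul _),
      integral_const_mul, integral_const_mul]
    rfl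
  rw [hsplit] at h0
  have hk0 : (2*(k:ℝ)) ≠ 0 := by positivity
  field_simp
  linarith [h0]

noncomputable def pp (m : ℕ) : ℝ := ∏ i ∈ range m, (2*(i:ℝ)+1)/(2*i+2)

lemma pp_pos (m : ℕ) : 0 < pp m := by
  apply Finset.prod_pos; intro i _; positivity

lemma pp_succ (m : ℕ) : pp (m+1) = pp m * ((2*m+1)/(2*m+2)) := by
  rw [pp, Finset.prod_range_succ, ← pp]

lemma Istir_eq (m : ℕ) : Istir (m+1) = π/2 * pp m := by
  induction m with
  | zero => simp [Istir_one, pp]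
  | succ m ih =>
      rw [Istir_succ (m+1) (by omega), ih, pp_succ]
      push_cast
      ring

lemma Istir_pos (m : ℕ) : 0 < Istir (m+1) := by
  rw [Istir_eq]
  have := pp_pos m
  positivity

lemma pp_W (m : ℕ) : pp m ^ 2 * ((2*m+1) * Real.Wallis.W m) = 1 := by
  induction m with
  | zero => simp [pp, Real.Wallis.W]
  | succ m ih =>
      have h1 : (0:ℝ) < 2*m+1 := by positivity
      have h2 : (0:ℝ) < 2*m+2 := by positivity
      have h3 : (0:ℝ) < 2*m+3 := by positivity
      have hW := Real.Wallis.W_pos m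
      have hppsq : pp m ^ 2 = ((2*m+1) * Real.Wallis.W m)⁻¹ := by
        field_simp
        linarith [ih]
      rw [pp_succ, Real.Wallis.W_succ, mul_pow, hppsq]
      push_cast
      field_simp
      ring

lemma Q_le (m : ℕ) : Istir (m+1)^2 * (2*m+1)^2 / (m+1) ≤ π := by
  have hW := Real.Wallis.le_W m
  have hWpos := Real.Wallis.W_pos m
  have hpp := pp_W m
  have h1 : (0:ℝ) < 2*m+1 := by positivity
  have h2 : (0:ℝ) < 2*m+2 := by positivity
  have hm1 : (0:ℝ) < (m:ℝ)+1 := by positivity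
  have hpi : 0 < π := Real.pi_pos
  have hW' : (2*(m:ℝ)+1) * (π/2) ≤ Real.Wallis.W m * (2*m+2) := by
    rw [div_mul_eq_mul_div, div_le_iff₀ h2] at hW
    linarith
  have hppsq : pp m ^ 2 = ((2*m+1) * Real.Wallis.W m)⁻¹ := by
    field_simp
    linarith [hpp]
  rw [Istir_eq, div_le_iff₀ hm1, mul_pow, hppsq]
  have key : (π/2)^2 * (2*(m:ℝ)+1) ≤ π * ((m+1) * Real.Wallis.W m) := by
    nlinarith
  calc (π/2)^2 * ((2*(m:ℝ)+1) * Real.Wallis.W m)⁻¹ * (2*m+1)^2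
      = ((π/2)^2 * (2*m+1)) * ((2*m+1) * ((2*m+1) * Real.Wallis.W m)⁻¹) := by ring
    _ = ((π/2)^2 * (2*m+1)) * (Real.Wallis.W m)⁻¹ := by
        congr 1
        rw [mul_inv]
        field_simp
    _ ≤ (π * ((m+1) * Real.Wallis.W m)) * (Real.Wallis.W m)⁻¹ := by
        apply mul_le_mul_of_nonneg_right key (by positivity)
    _ = π * (m+1) := by field_simp

lemma Q_mono (m : ℕ) :
    Istir (m+1)^2 * (2*m+1)^2 / (m+1)
      < Istir (m+2)^2 * (2*(m:ℝ)+3)^2 / ((m:ℝ)+2) := by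
  have hrec : Istir (m+2) = (2*m+1)/(2*m+2) * Istir (m+1) := by
    have := Istir_succ (m+1) (by omega)
    rw [this]
    push_cast
    ring_nf
  have hI := Istir_pos m
  have h1 : (0:ℝ) < 2*m+1 := by positivity
  have h2 : (0:ℝ) < 2*m+2 := by positivity
  have hm1 : (0:ℝ) < (m:ℝ)+1 := by positivity
  have hm2 : (0:ℝ) < (m:ℝ)+2 := by positivity
  have e : Istir (m+2)^2 * (2*(m:ℝ)+3)^2 / ((m:ℝ)+2)
      = (Istir (m+1)^2 * (2*m+1)^2 / (m+1))
          * ((2*(m:ℝ)+3)^2*((m:ℝ)+1)/((2*(m:ℝ)+2)^2*((m:ℝ)+2))) := by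
    rw [hrec]
    field_simp
  rw [e]
  have hQpos : 0 < Istir (m+1)^2 * (2*(m:ℝ)+1)^2 / ((m:ℝ)+1) := by positivity
  nth_rewrite 1 [← mul_one (Istir (m+1)^2 * (2*(m:ℝ)+1)^2 / ((m:ℝ)+1))]
  apply mul_lt_mul_of_pos_left _ hQpos
  rw [lt_div_iff₀ (by positivity)]
  nlinarith

lemma Istir_lt (k : ℕ) (hk : 1 ≤ k) : Istir k * (2*(k:ℝ)-1) < Real.sqrt (π * k) := by
  obtain ⟨m, rfl⟩ : ∃ m, k = m + 1 := ⟨k-1, by omega⟩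
  have hQle := Q_le (m+1)
  push_cast at hQle
  have h2le : Istir (m+2)^2 * (2*(m:ℝ)+3)^2 / ((m:ℝ)+2) ≤ π := by
    rw [show m+1+1 = m+2 from rfl] at hQle
    rw [show 2*((m:ℝ)+1)+1 = 2*(m:ℝ)+3 by ring, show (m:ℝ)+1+1 = (m:ℝ)+2 by ring] at hQle
    exact hQle
  have hQ : Istir (m+1)^2 * (2*(m:ℝ)+1)^2 / ((m:ℝ)+1) < π := lt_of_lt_of_le (Q_mono m) h2le
  have hI := Istir_pos m
  push_cast
  rw [show 2*((m:ℝ)+1)-1 = 2*(m:ℝ)+1 by ring]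
  apply (Real.lt_sqrt (by positivity)).mpr
  rw [div_lt_iff₀ (by positivity)] at hQ
  nlinarith [hQ]

lemma scaled_int (k : ℕ) (hk : 1 ≤ k) {c : ℝ} (hc : 0 < c) :
    IntegrableOn (fun u : ℝ => ((u^2+c^2)^k)⁻¹) (Set.Ioi 0)
    ∧ ∫ u in Set.Ioi (0:ℝ), ((u^2+c^2)^k)⁻¹ = (c^(2*k-1))⁻¹ * Istir k := by
  set g : ℝ → ℝ := fun x => ((1+x^2)^k)⁻¹ with hg
  have hfun : ∀ u : ℝ, ((u^2+c^2)^k)⁻¹ = (c^(2*k))⁻¹ * g (c⁻¹ * u) := by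
    intro u
    rw [hg]
    simp only
    rw [← mul_inv]
    congr 1
    rw [pow_mul, ← mul_pow]
    congr 1
    field_simp
    ring
  have hint : IntegrableOn (fun u => g (c⁻¹ * u)) (Set.Ioi 0) := by
    have := (integrableOn_Ioi_comp_mul_left_iff g 0 (inv_pos.mpr hc)).mpr
    rw [mul_zero] at this
    exact this (integrableOn_I k hk)
  constructor
  · simp_rw [hfun]
    exact hint.const_mul _
  · simp_rw [hfun]
    rw [integral_const_mul]
    rw [integral_comp_mul_left_Ioi g 0 (inv_pos.mpr hc), mul_zero, inv_inv, smul_eq_mul, ← Istir]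
    rw [← mul_assoc]
    congr 1
    have hce : c^(2*k) = c^(2*k-1) * c := by
      rw [← pow_succ]
      congr 1
      omega
    rw [hce, mul_inv, mul_assoc, inv_mul_cancel₀ hc.ne', mul_one]


theorem abs_Rnext_lt_sqrt_pi_k_mul (k : ℕ) (hk : 1 ≤ k) (z : ℂ)
    (hz : 0 ≤ z.re) (hz0 : z ≠ 0) :
    ‖Rnext k z‖ < Real.sqrt (π * k) * ‖T k z‖ := by
  set c : ℝ := ‖z‖ with hcdef
  have hc : 0 < c := norm_pos_iff.mpr hz0
  obtain ⟨hBne, hBle⟩ := bern_bound_s2 k hk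
  set M : ℝ := |(bernoulli (2*k) : ℝ)| with hM
  have hMpos : 0 < M := abs_pos.mpr hBne
  have hk1 : (1:ℝ) ≤ (k:ℝ) := by exact_mod_cast hk
  have h2k : (0:ℝ) < 2*(k:ℝ) := by linarith
  have h2k1 : (0:ℝ) < 2*(k:ℝ)-1 := by linarith
  obtain ⟨hgint0, hgval⟩ := scaled_int k hk hc
  -- the dominating function
  set g : ℝ → ℝ := fun u => (M * (2*(k:ℝ))⁻¹) * ((u^2+c^2)^k)⁻¹ with hg
  have hgint : IntegrableOn g (Set.Ioi 0) := hgint0.const_mul _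
  -- pointwise bound
  have hptwise : ∀ u ∈ Set.Ioi (0:ℝ),
      ‖((Polynomial.aeval (Int.fract u) (Polynomial.bernoulli (2 * k)) : ℝ) : ℂ) /
        ((2 * (k : ℂ)) * ((u : ℂ) + z) ^ (2 * k))‖ ≤ g u := by
    intro u hu
    rw [Set.mem_Ioi] at hu
    have haev : (Polynomial.aeval (Int.fract u) (Polynomial.bernoulli (2 * k)) : ℝ)
        = bernoulliFun (2*k) (Int.fract u) := by
      rw [bernoulliFun, Polynomial.eval_map, Polynomial.aeval_def]
    have hnum : ‖((Polynomial.aeval (Int.fract u) (Polynomial.bernoulli (2 * k)) : ℝ) : ℂ)‖ ≤ M := by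
      rw [Complex.norm_real, Real.norm_eq_abs, haev]
      exact hBle _ ⟨Int.fract_nonneg u, (Int.fract_lt_one u).le⟩
    have hdenom : (2*(k:ℝ)) * (u^2+c^2)^k ≤ ‖(2 * (k : ℂ)) * ((u : ℂ) + z) ^ (2 * k)‖ := by
      rw [norm_mul, norm_pow]
      have h2 : ‖(2 * (k : ℂ))‖ = 2*(k:ℝ) := by
        rw [show (2 * (k:ℂ)) = ((2*(k:ℝ) : ℝ) : ℂ) by push_cast; ring, Complex.norm_real,
          Real.norm_eq_abs, abs_of_pos h2k]
      rw [h2]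
      apply mul_le_mul_of_nonneg_left _ h2k.le
      have hsq : u^2 + c^2 ≤ ‖(u:ℂ) + z‖^2 := by
        have h1 : ‖(u:ℂ)+z‖^2 = (u+z.re)^2 + z.im^2 := by
          rw [Complex.sq_norm, Complex.normSq_apply, Complex.add_re,
            Complex.add_im, Complex.ofReal_re, Complex.ofReal_im, zero_add]
          ring
        have h2c : c^2 = z.re^2 + z.im^2 := by
          rw [hcdef, Complex.sq_norm, Complex.normSq_apply]
          ring
        rw [h1, h2c]
        nlinarith [hu.le, hz]
      calc (u^2+c^2)^k ≤ (‖(u:ℂ) + z‖^2)^k := by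
            apply pow_le_pow_left₀ (by positivity) hsq
        _ = ‖(u:ℂ) + z‖^(2*k) := by rw [← pow_mul, mul_comm]
    rw [norm_div]
    calc ‖((Polynomial.aeval (Int.fract u) (Polynomial.bernoulli (2 * k)) : ℝ) : ℂ)‖ /
          ‖(2 * (k : ℂ)) * ((u : ℂ) + z) ^ (2 * k)‖
        ≤ M / ((2*(k:ℝ)) * (u^2+c^2)^k) :=
          div_le_div₀ hMpos.le hnum (by positivity) hdenom
      _ = g u := by rw [hg]; field_simp
  -- norm of the integral
  have hRle : ‖Rnext k z‖ ≤ M * (2*(k:ℝ))⁻¹ * ((c^(2*k-1))⁻¹ * Istir k) := by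
    rw [Rnext, norm_neg]
    calc ‖∫ u in Set.Ioi (0 : ℝ),
          ((Polynomial.aeval (Int.fract u) (Polynomial.bernoulli (2 * k)) : ℝ) : ℂ) /
            ((2 * (k : ℂ)) * ((u : ℂ) + z) ^ (2 * k))‖
        ≤ ∫ u in Set.Ioi (0 : ℝ), g u := by
          apply norm_integral_le_of_norm_le hgint
          filter_upwards [ae_restrict_mem measurableSet_Ioi] with u hu
          exact hptwise u hu
      _ = M * (2*(k:ℝ))⁻¹ * ((c^(2*k-1))⁻¹ * Istir k) := by
          rw [hg, integral_const_mul, hgval]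
  -- norm of T
  have hT : ‖T k z‖ = M / ((2*(k:ℝ)) * (2*(k:ℝ)-1) * c^(2*k-1)) := by
    rw [T, norm_div, norm_mul, norm_mul, norm_pow]
    congr 1
    · rw [show ((bernoulli (2*k) : ℚ) : ℂ) = (((bernoulli (2*k) : ℝ)) : ℂ) by push_cast; rfl,
        Complex.norm_real, Real.norm_eq_abs, hM]
    · congr 2
      · rw [show (2 * (k:ℂ)) = ((2*(k:ℝ) : ℝ) : ℂ) by push_cast; ring, Complex.norm_real,
          Real.norm_eq_abs, abs_of_pos h2k]
      · rw [show (2 * (k:ℂ) - 1) = ((2*(k:ℝ)-1 : ℝ) : ℂ) by push_cast; ring, Complex.norm_real,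
          Real.norm_eq_abs, abs_of_pos h2k1]
  -- final comparison
  have hIpos : 0 < Istir k := by
    obtain ⟨m, rfl⟩ : ∃ m, k = m + 1 := ⟨k-1, by omega⟩
    exact Istir_pos m
  have hIlt := Istir_lt k hk
  have hcp : (0:ℝ) < c^(2*k-1) := by positivity
  calc ‖Rnext k z‖ ≤ M * (2*(k:ℝ))⁻¹ * ((c^(2*k-1))⁻¹ * Istir k) := hRle
    _ < M * (2*(k:ℝ))⁻¹ * ((c^(2*k-1))⁻¹ * (Real.sqrt (π * k) / (2*(k:ℝ)-1))) := by
        apply mul_lt_mul_of_pos_left _ (by positivity)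
        apply mul_lt_mul_of_pos_left _ (by positivity)
        rw [lt_div_iff₀ h2k1]
        exact hIlt
    _ = Real.sqrt (π * k) * (M / ((2*(k:ℝ)) * (2*(k:ℝ)-1) * c^(2*k-1))) := by
        field_simp
    _ = Real.sqrt (π * k) * ‖T k z‖ := by rw [hT]
end

section
/- Let k ≥ 1 be an integer and let z ∈ ℂ satisfy Re(z) ≥ 0 and z ≠ 0. Then |R_k(z)| < (1 + √(πk)) · |T_k(z)|. -/
open MeasureTheory Real
open Set Filter
open scoped Nat

namespace StirlingAux


noncomputable def S (n : ℕ) : ℝ := ∫ x in (0:ℝ)..π, Real.sin x ^ n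

lemma S_pos (n : ℕ) : 0 < S n := integral_sin_pow_pos n

lemma S_zero : S 0 = π := by simp [S]

lemma S_one : S 1 = 2 := by simp [S]; norm_num

lemma S_rec (n : ℕ) : S (n + 2) = (n + 1) / (n + 2) * S n := by
  have := integral_sin_pow (a := 0) (b := π) n
  simpa [S, Real.sin_pi] using this

lemma S_mul_succ (n : ℕ) : S n * S (n + 1) = 2 * π / (n + 1) := by
  induction n with
  | zero => simp [S_zero, S_one]; ring
  | succ n ih =>
    have h2 : S (n + 2) = (n + 1) / (n + 2) * S n := S_rec n
    have hn1 : (0:ℝ) < n + 1 := by positivity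
    have hn2 : (0:ℝ) < n + 2 := by positivity
    have e : S (n + 1) * ((↑n + 1) / (↑n + 2) * S n)
        = (↑n + 1) / (↑n + 2) * (S n * S (n + 1)) := by ring
    rw [h2, e, ih]
    push_cast
    field_simp
    ring

lemma S_succ_lt (n : ℕ) (hn : 1 ≤ n) : S (n + 1) < S n := by
  have hπ : (0:ℝ) < π := Real.pi_pos
  refine intervalIntegral.integral_lt_integral_of_continuousOn_of_le_of_exists_lt hπ
    (Continuous.continuousOn (by fun_prop)) (Continuous.continuousOn (by fun_prop)) ?_ ?_
  · intro x hx
    have h0 : 0 ≤ Real.sin x := Real.sin_nonneg_of_nonneg_of_le_pi hx.1.le hx.2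
    exact pow_le_pow_of_le_one h0 (Real.sin_le_one x) (Nat.le_succ n)
  · refine ⟨π / 6, ⟨by positivity, by linarith⟩, ?_⟩
    rw [Real.sin_pi_div_six]
    exact pow_lt_pow_right_of_lt_one₀ (by norm_num) (by norm_num) (Nat.lt_succ_self n)

lemma wallis_lt (m : ℕ) :
    (2 * m + 1 : ℝ) * (S (2 * m) / 2) < Real.sqrt (π * (m + 1)) := by
  have hπ := Real.pi_pos
  have h1 : S (2 * m) * S (2 * m + 1) = 2 * π / (2 * m + 1) := by
    have := S_mul_succ (2 * m); push_cast at this ⊢; linarith [this]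
  have h2 : S (2 * m + 2) = (2 * m + 1) / (2 * m + 2) * S (2 * m) := by
    have := S_rec (2 * m); push_cast at this ⊢; linarith [this]
  have h3 : S (2 * m + 2) < S (2 * m + 1) := S_succ_lt (2 * m + 1) (by omega)
  have hp0 := S_pos (2 * m)
  have hp1 := S_pos (2 * m + 1)
  have hd : (0:ℝ) < 2 * m + 1 := by positivity
  have h4 : S (2 * m) < (2 * m + 2) / (2 * m + 1) * S (2 * m + 1) := by
    rw [h2] at h3
    rw [div_mul_eq_mul_div, lt_div_iff₀ hd]
    rw [div_mul_eq_mul_div, div_lt_iff₀ (by positivity : (0:ℝ) < 2 * (m:ℝ) + 2)] at h3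
    linarith
  rw [show π * ((m:ℝ) + 1) = π * (m + 1) from rfl]
  rw [Real.lt_sqrt (by positivity)]
  have h5 : S (2 * m) ^ 2 < (2 * m + 2) / (2 * m + 1) * (2 * π / (2 * m + 1)) := by
    calc S (2 * m) ^ 2 = S (2 * m) * S (2 * m) := sq (S (2*m)) ▸ by ring
    _ < (2 * m + 2) / (2 * m + 1) * S (2 * m + 1) * S (2 * m) := by
        exact mul_lt_mul_of_pos_right h4 hp0
    _ = (2 * m + 2) / (2 * m + 1) * (S (2 * m) * S (2 * m + 1)) := by ring
    _ = (2 * m + 2) / (2 * m + 1) * (2 * π / (2 * m + 1)) := by rw [h1]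
  have expand : ((2 * m + 1 : ℝ) * (S (2 * m) / 2)) ^ 2
      = (2 * m + 1) ^ 2 / 4 * S (2 * m) ^ 2 := by ring
  rw [expand]
  calc (2 * (m:ℝ) + 1) ^ 2 / 4 * S (2 * m) ^ 2
      < (2 * m + 1) ^ 2 / 4 * ((2 * m + 2) / (2 * m + 1) * (2 * π / (2 * m + 1))) := by
        exact mul_lt_mul_of_pos_left h5 (by positivity)
    _ = π * (m + 1) := by field_simp; ring




lemma J_spec (r : ℝ) (hr : 0 < r) (m : ℕ) :
    IntegrableOn (fun u : ℝ => ((u ^ 2 + r ^ 2) ^ (m + 1))⁻¹) (Ioi 0) ∧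
      ∫ u in Ioi (0:ℝ), ((u ^ 2 + r ^ 2) ^ (m + 1))⁻¹
        = (S (2 * m) / 2) / r ^ (2 * m + 1) := by
  have hA : ∀ u : ℝ, (0:ℝ) < u ^ 2 + r ^ 2 := fun u => by positivity
  induction m with
  | zero =>
    have hderiv : ∀ u : ℝ, HasDerivAt (fun x : ℝ => r⁻¹ * Real.arctan (x / r))
        (((u ^ 2 + r ^ 2) ^ (0 + 1))⁻¹) u := by
      intro u
      have h1 : HasDerivAt (fun x : ℝ => Real.arctan (x / r))
          ((1 / (1 + (u / r) ^ 2)) * (1 / r)) u := by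
        have := (Real.hasDerivAt_arctan (u / r)).comp u ((hasDerivAt_id u).div_const r)
        simpa [Function.comp_def] using this
      have h2 := h1.const_mul r⁻¹
      refine h2.congr_deriv ?_
      field_simp
      ring
    have htend : Tendsto (fun x : ℝ => r⁻¹ * Real.arctan (x / r)) atTop
        (nhds (r⁻¹ * (π / 2))) := by
      refine Tendsto.const_mul _ ?_
      refine (Real.tendsto_arctan_atTop.mono_right nhdsWithin_le_nhds).comp ?_
      exact tendsto_id.atTop_div_const hr
    have hnonneg : ∀ x ∈ Ioi (0:ℝ), (0:ℝ) ≤ ((x ^ 2 + r ^ 2) ^ (0 + 1))⁻¹ := by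
      intro x _; positivity
    have hint := integrableOn_Ioi_deriv_of_nonneg' (fun x _ => hderiv x) hnonneg htend
    refine ⟨hint, ?_⟩
    rw [integral_Ioi_of_hasDerivAt_of_tendsto' (fun x _ => hderiv x) hint htend]
    simp [S_zero, Real.arctan_zero]
    ring
  | succ m ih =>
    obtain ⟨hint, hval⟩ := ih
    set k := m + 1 with hk
    -- continuity of the next integrand
    have hc2 : Continuous fun u : ℝ => ((u ^ 2 + r ^ 2) ^ (k + 1))⁻¹ :=
      Continuous.inv₀ (by fun_prop) (fun u => by positivity)
    -- integrability of the next integrand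
    have h2int : IntegrableOn (fun u : ℝ => ((u ^ 2 + r ^ 2) ^ (k + 1))⁻¹) (Ioi 0) := by
      refine Integrable.mono (hint.const_mul ((r ^ 2)⁻¹)) hc2.aestronglyMeasurable.restrict ?_
      refine ae_of_all _ fun u => ?_
      have h1 : (0:ℝ) < (u ^ 2 + r ^ 2) ^ k := by positivity
      rw [Real.norm_eq_abs, Real.norm_eq_abs, abs_of_nonneg (by positivity),
        abs_of_nonneg (by positivity)]
      rw [show (u ^ 2 + r ^ 2) ^ (k + 1) = (u ^ 2 + r ^ 2) ^ k * (u ^ 2 + r ^ 2) from pow_succ _ _]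
      rw [mul_inv]
      rw [mul_comm ((r ^ 2)⁻¹) _]
      refine mul_le_mul_of_nonneg_left ?_ (by positivity)
      exact inv_anti₀ (by positivity) (by nlinarith)
    -- the auxiliary function and its derivative
    have hφ : ∀ u : ℝ, HasDerivAt (fun x : ℝ => x * ((x ^ 2 + r ^ 2) ^ k)⁻¹)
        ((-(2 * k - 1)) * ((u ^ 2 + r ^ 2) ^ k)⁻¹
          + (2 * k * r ^ 2) * ((u ^ 2 + r ^ 2) ^ (k + 1))⁻¹) u := by
      intro u
      have hA' : HasDerivAt (fun x : ℝ => x ^ 2 + r ^ 2) (2 * u) u := by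
        simpa using (hasDerivAt_pow 2 u).add_const (r ^ 2)
      have hp : HasDerivAt (fun x : ℝ => (x ^ 2 + r ^ 2) ^ k)
          ((k : ℝ) * (u ^ 2 + r ^ 2) ^ (k - 1) * (2 * u)) u := hA'.pow k
      have hne : ((u ^ 2 + r ^ 2) ^ k) ≠ 0 := by positivity
      have hinv := hp.inv hne
      have hmul := (hasDerivAt_id u).mul hinv
      refine hmul.congr_deriv ?_
      have hkm : k - 1 = m := by omega
      rw [hkm]
      have hAne : (u ^ 2 + r ^ 2) ≠ 0 := (hA u).ne'
      simp only [Pi.inv_apply, id_eq, hk]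
      field_simp
      push_cast
      ring
    -- tendsto 0 at top
    have htend : Tendsto (fun x : ℝ => x * ((x ^ 2 + r ^ 2) ^ k)⁻¹) atTop (nhds 0) := by
      refine squeeze_zero' ?_ ?_ tendsto_inv_atTop_zero
      · filter_upwards [eventually_ge_atTop (0:ℝ)] with x hx
        positivity
      · filter_upwards [eventually_ge_atTop (1:ℝ)] with x hx
        have hx0 : (0:ℝ) < x := by linarith
        have h1 : x ^ 2 ≤ (x ^ 2 + r ^ 2) ^ k := by
          calc x ^ 2 ≤ (x ^ 2) ^ k := by
                refine le_self_pow₀ ?_ (by omega)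
                nlinarith
            _ ≤ (x ^ 2 + r ^ 2) ^ k := by
                refine pow_le_pow_left₀ (by positivity) (by nlinarith) k
        calc x * ((x ^ 2 + r ^ 2) ^ k)⁻¹ ≤ x * (x ^ 2)⁻¹ := by
              refine mul_le_mul_of_nonneg_left (inv_anti₀ (by positivity) h1) hx0.le
          _ = x⁻¹ := by field_simp
    -- integrability of the derivative
    have hderint : IntegrableOn (fun u : ℝ =>
        (-(2 * (k:ℝ) - 1)) * ((u ^ 2 + r ^ 2) ^ k)⁻¹
          + (2 * (k:ℝ) * r ^ 2) * ((u ^ 2 + r ^ 2) ^ (k + 1))⁻¹) (Ioi 0) :=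
      (hint.const_mul _).add (h2int.const_mul _)
    have hFTC := integral_Ioi_of_hasDerivAt_of_tendsto' (fun x _ => hφ x) hderint htend
    rw [show (0:ℝ) * ((0 ^ 2 + r ^ 2) ^ k)⁻¹ = 0 by ring, sub_zero] at hFTC
    rw [integral_add (hint.const_mul _) (h2int.const_mul _), integral_const_mul,
      integral_const_mul, hval] at hFTC
    refine ⟨h2int, ?_⟩
    have hJ2 : ∫ u in Ioi (0:ℝ), ((u ^ 2 + r ^ 2) ^ (k + 1))⁻¹
        = (2 * (k:ℝ) - 1) / (2 * (k:ℝ) * r ^ 2) * ((S (2 * m) / 2) / r ^ (2 * m + 1)) := by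
      have hk0 : (0:ℝ) < 2 * (k:ℝ) * r ^ 2 := by positivity
      have hkne : (k:ℝ) ≠ 0 := by positivity
      field_simp at hFTC ⊢
      linarith
    rw [hJ2]
    have hSrec : S (2 * (m + 1)) = (2 * (m:ℝ) + 1) / (2 * (m:ℝ) + 2) * S (2 * m) := by
      have := S_rec (2 * m)
      rw [show 2 * (m + 1) = 2 * m + 2 by omega]
      push_cast at this ⊢
      linarith
    rw [hSrec, hk]
    have hrne : r ≠ 0 := hr.ne'
    rw [show 2 * (m + 1) + 1 = (2 * m + 1) + 2 by omega]
    push_cast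
    field_simp
    ring



lemma bern_bound (k : ℕ) (hk : k ≠ 0) :
    0 < |(bernoulli (2 * k) : ℝ)| ∧
      ∀ x ∈ Icc (0:ℝ) 1, |bernoulliFun (2 * k) x| ≤ |(bernoulli (2 * k) : ℝ)| := by
  set C : ℝ := (-1 : ℝ) ^ (k + 1) * (2 * π) ^ (2 * k) / 2 / (2 * k)! with hC
  set b0 : ℝ := (bernoulli (2 * k) : ℝ) with hb0
  have h0 : HasSum (fun n : ℕ => 1 / (n : ℝ) ^ (2 * k)) (C * b0) := by
    have h := hasSum_one_div_nat_pow_mul_cos hk (left_mem_Icc.mpr zero_le_one)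
    simp only [mul_zero, Real.cos_zero, mul_one] at h
    have he : (Polynomial.map (algebraMap ℚ ℝ) (Polynomial.bernoulli (2 * k))).eval 0 = b0 := by
      rw [Polynomial.eval_zero_map, Polynomial.bernoulli_eval_zero, eq_ratCast]
    rw [he] at h
    exact h
  have h1 : (1:ℝ) ≤ C * b0 := by
    have := le_hasSum h0 1 (fun j _ => by positivity)
    simpa using this
  have hCabs : |C| = (2 * π) ^ (2 * k) / 2 / (2 * k)! := by
    rw [hC, abs_div, abs_div, abs_mul, abs_pow, abs_neg, abs_one, one_pow, one_mul,
      abs_of_nonneg (by positivity : (0:ℝ) ≤ (2 * π) ^ (2 * k)), Nat.abs_cast,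
      abs_of_nonneg (by norm_num : (0:ℝ) ≤ 2)]
  have hCpos : 0 < |C| := by rw [hCabs]; positivity
  have hCb : |C| * |b0| = C * b0 := by
    rw [← abs_mul, abs_of_nonneg (by linarith)]
  have hb0pos : 0 < |b0| := by
    by_contra h
    push_neg at h
    have : |b0| = 0 := le_antisymm h (abs_nonneg _)
    rw [this, mul_zero] at hCb
    linarith
  refine ⟨hb0pos, fun x hx => ?_⟩
  have hsx := hasSum_one_div_nat_pow_mul_cos hk hx
  have hsx' : HasSum (fun n : ℕ => 1 / (n : ℝ) ^ (2 * k) * Real.cos (2 * π * n * x))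
      (C * bernoulliFun (2 * k) x) := hsx
  have hbound : ∀ n : ℕ, |1 / (n : ℝ) ^ (2 * k) * Real.cos (2 * π * n * x)|
      ≤ 1 / (n : ℝ) ^ (2 * k) := by
    intro n
    rw [abs_mul, abs_of_nonneg (by positivity : (0:ℝ) ≤ 1 / (n:ℝ) ^ (2*k))]
    calc 1 / (n:ℝ) ^ (2*k) * |Real.cos (2 * π * n * x)|
        ≤ 1 / (n:ℝ) ^ (2*k) * 1 :=
          mul_le_mul_of_nonneg_left (Real.abs_cos_le_one _) (by positivity)
      _ = 1 / (n:ℝ) ^ (2*k) := mul_one _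
  have hsabs : Summable (fun n : ℕ => |1 / (n : ℝ) ^ (2 * k) * Real.cos (2 * π * n * x)|) :=
    Summable.of_nonneg_of_le (fun n => abs_nonneg _) hbound h0.summable
  have key : |C * bernoulliFun (2 * k) x| ≤ C * b0 := by
    rw [← hsx'.tsum_eq]
    calc |∑' n : ℕ, 1 / (n : ℝ) ^ (2 * k) * Real.cos (2 * π * n * x)|
        ≤ ∑' n : ℕ, |1 / (n : ℝ) ^ (2 * k) * Real.cos (2 * π * n * x)| := by
          have hn : Summable (fun n : ℕ => ‖1 / (n : ℝ) ^ (2 * k) * Real.cos (2 * π * n * x)‖) := by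
            simp only [Real.norm_eq_abs]; exact hsabs
          have := norm_tsum_le_tsum_norm hn
          simp only [Real.norm_eq_abs] at this
          exact this
      _ ≤ ∑' n : ℕ, 1 / (n : ℝ) ^ (2 * k) := Summable.tsum_le_tsum hbound hsabs h0.summable
      _ = C * b0 := h0.tsum_eq
  rw [abs_mul] at key
  rw [← hCb] at key
  exact le_of_mul_le_mul_left key hCpos


end StirlingAux


theorem abs_R_lt_one_add_sqrt_pi_k_mul (k : ℕ) (hk : 1 ≤ k) (z : ℂ)
    (hz : 0 ≤ z.re) (hz0 : z ≠ 0) :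
    ‖R k z‖ < (1 + Real.sqrt (π * k)) * ‖T k z‖ := by
  obtain ⟨m, rfl⟩ : ∃ m, k = m + 1 := ⟨k - 1, by omega⟩
  set r : ℝ := ‖z‖ with hr
  have hrpos : 0 < r := by
    rw [hr]; exact norm_pos_iff.mpr hz0
  obtain ⟨hbpos, hble⟩ := StirlingAux.bern_bound (m + 1) (by omega)
  set b : ℝ := |(bernoulli (2 * (m + 1)) : ℝ)| with hb
  have hmexp : 2 * (m + 1) - 1 = 2 * m + 1 := by omega
  set D : ℝ := (2 * m + 2) * (2 * m + 1) * r ^ (2 * m + 1) with hD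
  have hDpos : 0 < D := by rw [hD]; positivity
  -- absolute value of T
  have hTabs : ‖T (m + 1) z‖ = b / D := by
    rw [T, norm_div]
    congr 1
    · rw [show ((bernoulli (2 * (m + 1)) : ℚ) : ℂ)
          = (((bernoulli (2 * (m + 1)) : ℚ) : ℝ) : ℂ) by norm_cast,
        Complex.norm_real, Real.norm_eq_abs, hb]
    · rw [norm_mul, norm_mul, norm_pow,
        show (2 * ((m + 1 : ℕ) : ℂ) - 1) = (((2 * m + 1 : ℝ)) : ℂ) by push_cast; ring,
        show (2 * ((m + 1 : ℕ) : ℂ)) = (((2 * m + 2 : ℝ)) : ℂ) by push_cast; ring,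
        Complex.norm_real, Complex.norm_real, Real.norm_eq_abs, Real.norm_eq_abs, hmexp, hD, ← hr,
        abs_of_nonneg (by positivity : (0:ℝ) ≤ 2 * (m:ℝ) + 2),
        abs_of_nonneg (by positivity : (0:ℝ) ≤ 2 * (m:ℝ) + 1)]
  have hTpos : 0 < ‖T (m + 1) z‖ := by rw [hTabs]; exact div_pos hbpos hDpos
  -- bound on Rnext
  obtain ⟨hJint, hJval⟩ := StirlingAux.J_spec r hrpos m
  have hRnext : ‖Rnext (m + 1) z‖
      ≤ b / (2 * m + 2) * ((StirlingAux.S (2 * m) / 2) / r ^ (2 * m + 1)) := by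
    rw [Rnext, norm_neg]
    have hbd : ∀ᵐ u ∂(volume.restrict (Ioi (0:ℝ))),
        ‖((Polynomial.aeval (Int.fract u) (Polynomial.bernoulli (2 * (m + 1))) : ℝ) : ℂ) /
          ((2 * ((m + 1 : ℕ) : ℂ)) * ((u : ℂ) + z) ^ (2 * (m + 1)))‖
        ≤ b / (2 * m + 2) * ((u ^ 2 + r ^ 2) ^ (m + 1))⁻¹ := by
      filter_upwards [ae_restrict_mem measurableSet_Ioi] with u hu
      have hu0 : (0:ℝ) < u := hu
      have hnum : |(Polynomial.aeval (Int.fract u) (Polynomial.bernoulli (2 * (m + 1))) : ℝ)|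
          ≤ b := by
        have he : (Polynomial.aeval (Int.fract u) (Polynomial.bernoulli (2 * (m + 1))) : ℝ)
            = bernoulliFun (2 * (m + 1)) (Int.fract u) := by
          rw [bernoulliFun, Polynomial.eval_map, Polynomial.aeval_def]
        rw [he]
        exact hble _ ⟨Int.fract_nonneg u, (Int.fract_lt_one u).le⟩
      have habs2 : (u ^ 2 + r ^ 2) ≤ ‖(u : ℂ) + z‖ ^ 2 := by
        have hr2 : r ^ 2 = z.re ^ 2 + z.im ^ 2 := by
          rw [hr, Complex.sq_norm, Complex.normSq_apply]; ring
        have ha : ‖(u:ℂ) + z‖ ^ 2 = (u + z.re) ^ 2 + z.im ^ 2 := by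
          rw [Complex.sq_norm, Complex.normSq_apply, Complex.add_re, Complex.add_im,
            Complex.ofReal_re, Complex.ofReal_im]; ring
        rw [ha, hr2]
        nlinarith [mul_nonneg hu0.le hz]
      have hden : ((u:ℝ) ^ 2 + r ^ 2) ^ (m + 1) ≤ ‖(u : ℂ) + z‖ ^ (2 * (m + 1)) := by
        calc ((u:ℝ) ^ 2 + r ^ 2) ^ (m + 1)
            ≤ (‖(u : ℂ) + z‖ ^ 2) ^ (m + 1) :=
              pow_le_pow_left₀ (by positivity) habs2 _
          _ = ‖(u : ℂ) + z‖ ^ (2 * (m + 1)) := by rw [← pow_mul]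
      rw [norm_div, Complex.norm_real, Real.norm_eq_abs, norm_mul,
        norm_pow, show (2 * ((m + 1 : ℕ) : ℂ)) = (((2 * m + 2 : ℝ)) : ℂ) by push_cast; ring,
        Complex.norm_real, Real.norm_eq_abs, abs_of_nonneg (by positivity : (0:ℝ) ≤ 2 * (m:ℝ) + 2)]
      rw [show b / (2 * (m:ℝ) + 2) * (((u:ℝ) ^ 2 + r ^ 2) ^ (m + 1))⁻¹
          = b / ((2 * (m:ℝ) + 2) * ((u:ℝ) ^ 2 + r ^ 2) ^ (m + 1)) by
        rw [← div_eq_mul_inv, div_div]]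
      refine div_le_div₀ hbpos.le hnum (by positivity) ?_
      exact mul_le_mul_of_nonneg_left hden (by positivity)
    refine le_trans (norm_integral_le_of_norm_le
      (hJint.const_mul (b / (2 * (m:ℝ) + 2))) hbd) ?_
    rw [integral_const_mul, hJval]
  -- assemble
  have htri : ‖R (m + 1) z‖
      ≤ ‖T (m + 1) z‖ + ‖Rnext (m + 1) z‖ := by
    rw [R]; exact norm_add_le _ _
  have hkey : b / (2 * m + 2) * ((StirlingAux.S (2 * m) / 2) / r ^ (2 * m + 1))
      = ((2 * m + 1) * (StirlingAux.S (2 * m) / 2)) * (b / D) := by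
    rw [hD]
    have : r ^ (2 * m + 1) ≠ 0 := by positivity
    field_simp
  have hwallis := StirlingAux.wallis_lt m
  have hcast : Real.sqrt (π * ((m + 1 : ℕ) : ℝ)) = Real.sqrt (π * ((m:ℝ) + 1)) := by push_cast; rfl
  calc ‖R (m + 1) z‖
      ≤ ‖T (m + 1) z‖ + ‖Rnext (m + 1) z‖ := htri
    _ ≤ ‖T (m + 1) z‖
        + ((2 * m + 1) * (StirlingAux.S (2 * m) / 2)) * (b / D) := by
        rw [← hkey]; linarith [hRnext]
    _ = (1 + (2 * m + 1) * (StirlingAux.S (2 * m) / 2)) * ‖T (m + 1) z‖ := by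
        rw [hTabs]; ring
    _ < (1 + Real.sqrt (π * ((m + 1 : ℕ) : ℝ))) * ‖T (m + 1) z‖ := by
        refine mul_lt_mul_of_pos_right ?_ hTpos
        rw [hcast]
        linarith [hwallis]
end
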